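/- Define u_t⁻(λ) = e^{−2t}λ + 2e^{−t}(1 − e^{−t})(√(1 + λ) − 1) for t ≥ 0, λ ≥ 0, and define φ₋(z) = 2z − 2(√(1 + z) − 1) for z ≥ 0. Then for every λ ≥ 0: u_0⁻(λ) = λ, u_t⁻(λ) ≥ 0 for all t ≥ 0, and t ↦ u_t⁻(λ) is differentiable on [0,∞) with (d/dt) u_t⁻(λ) = −φ₋(u_t⁻(λ)) for all t ≥ 0. (In particular √(1 + u_t⁻(λ)) = 1 + e^{−t}(√(1 + λ) − 1).) -/

import Mathlib

/-- `u_t⁻(λ) = e^{-2t}λ + 2e^{-t}(1-e^{-t})(√(1+λ) - 1)`. -/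
noncomputable def uMinus (t lam : ℝ) : ℝ :=
  Real.exp (-2 * t) * lam + 2 * Real.exp (-t) * (1 - Real.exp (-t)) * (Real.sqrt (1 + lam) - 1)

/-- `φ₋(z) = 2z - 2(√(1+z) - 1)`. -/
noncomputable def phiMinus (z : ℝ) : ℝ := 2 * z - 2 * (Real.sqrt (1 + z) - 1)

/-!
Write `w_t = 1 + e^{-t}(√(1+λ) - 1)`. Completing the square gives `u_t⁻(λ) = w_t² - 1`, and
`w_t ≥ 1` when `λ ≥ 0`, so `√(1 + u_t⁻(λ)) = w_t` and `u_t⁻(λ) ≥ 0`. Since `w_t' = 1 - w_t` and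
`φ₋(w² - 1) = 2w(w - 1)` for `w ≥ 0`, the chain rule gives `(w_t² - 1)' = 2w_t(1 - w_t) = -φ₋(u_t⁻(λ))`.
-/

open Real

noncomputable def uMinusSqrt (t lam : ℝ) : ℝ := 1 + exp (-t) * (√(1 + lam) - 1)

theorem uMinus_zero (lam : ℝ) : uMinus 0 lam = lam := by
  simp [uMinus]

theorem uMinus_eq_uMinusSqrt_sq_sub_one (t : ℝ) {lam : ℝ} (hlam : -1 ≤ lam) :
    uMinus t lam = uMinusSqrt t lam ^ 2 - 1 := by
  have hsq : √(1 + lam) ^ 2 = 1 + lam := sq_sqrt (by linarith)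
  have hexp : exp (-2 * t) = exp (-t) ^ 2 := by rw [← exp_nat_mul]; ring_nf
  rw [uMinus, uMinusSqrt, hexp]
  linear_combination (-exp (-t) ^ 2) * hsq

theorem one_le_uMinusSqrt (t : ℝ) {lam : ℝ} (hlam : 0 ≤ lam) : 1 ≤ uMinusSqrt t lam := by
  have hsqrt : 1 ≤ √(1 + lam) := one_le_sqrt.mpr (by linarith)
  have hshift : 0 ≤ exp (-t) * (√(1 + lam) - 1) := mul_nonneg (exp_nonneg _) (by linarith)
  rw [uMinusSqrt]
  linarith

theorem sqrt_one_add_uMinus (t : ℝ) {lam : ℝ} (hlam : 0 ≤ lam) :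
    √(1 + uMinus t lam) = uMinusSqrt t lam := by
  rw [uMinus_eq_uMinusSqrt_sq_sub_one t (by linarith), add_sub_cancel]
  exact sqrt_sq (by linarith [one_le_uMinusSqrt t hlam])

theorem uMinus_nonneg (t : ℝ) {lam : ℝ} (hlam : 0 ≤ lam) : 0 ≤ uMinus t lam := by
  rw [uMinus_eq_uMinusSqrt_sq_sub_one t (by linarith), sub_nonneg]
  exact one_le_pow₀ (one_le_uMinusSqrt t hlam)

theorem phiMinus_sq_sub_one {w : ℝ} (hw : 0 ≤ w) : phiMinus (w ^ 2 - 1) = 2 * w * (w - 1) := by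
  rw [phiMinus, add_sub_cancel, sqrt_sq hw]
  ring

theorem hasDerivAt_uMinusSqrt (t lam : ℝ) :
    HasDerivAt (uMinusSqrt · lam) (1 - uMinusSqrt t lam) t := by
  have h : HasDerivAt (uMinusSqrt · lam) (exp (-t) * -1 * (√(1 + lam) - 1)) t :=
    (((hasDerivAt_neg' t).exp).mul_const (√(1 + lam) - 1)).const_add 1
  exact h.congr_deriv (by rw [uMinusSqrt]; ring)

theorem hasDerivAt_uMinus (t : ℝ) {lam : ℝ} (hlam : 0 ≤ lam) :
    HasDerivAt (uMinus · lam) (-phiMinus (uMinus t lam)) t := by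
  have hfun : (uMinus · lam) = fun s => uMinusSqrt s lam ^ 2 - 1 :=
    funext fun s => uMinus_eq_uMinusSqrt_sq_sub_one s (by linarith)
  have hw : 0 ≤ uMinusSqrt t lam := by linarith [one_le_uMinusSqrt t hlam]
  rw [hfun, uMinus_eq_uMinusSqrt_sq_sub_one t (by linarith), phiMinus_sq_sub_one hw]
  have h : HasDerivAt (fun s => uMinusSqrt s lam ^ 2 - 1)
      (2 * uMinusSqrt t lam * (1 - uMinusSqrt t lam)) t := by
    simpa using ((hasDerivAt_uMinusSqrt t lam).fun_pow 2).sub_const 1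
  exact h.congr_deriv (by ring)

theorem stmt18 :
    ∀ lam : ℝ, 0 ≤ lam →
      uMinus 0 lam = lam ∧
      (∀ t : ℝ, 0 ≤ t → 0 ≤ uMinus t lam) ∧
      (∀ t : ℝ, 0 ≤ t →
        HasDerivAt (fun s => uMinus s lam) (-phiMinus (uMinus t lam)) t) ∧
      (∀ t : ℝ, 0 ≤ t →
        Real.sqrt (1 + uMinus t lam) = 1 + Real.exp (-t) * (Real.sqrt (1 + lam) - 1)) := by
  intro lam hlam
  exact ⟨uMinus_zero lam, fun t _ => uMinus_nonneg t hlam, fun t _ => hasDerivAt_uMinus t hlam,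
    fun t _ => sqrt_one_add_uMinus t hlam⟩
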